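/- For every natural number d there exists a natural number j (depending only on d) such that every finite subgroup G of the general linear group GL_d(ℂ) contains a normal abelian subgroup A of G whose index [G : A] is at most j. -/

import Mathlib

/-!
Averaging the form `star g * g` over a finite group `G` of units of a C⋆-algebra gives a strictly
positive element `star b * b` invariant under `G`, so `b G b⁻¹` consists of unitaries. For unitaries
`‖⁅u, v⁆ - 1‖ ≤ 2 ‖u - 1‖ ‖v - 1‖`, so commutators of elements close to `1` are even closer to `1`.
Among the elements `b` within `1/5` of `1` that fail to commute with a given such `a`, one with
`‖b - 1‖` minimal has `⁅a, b⁆` commuting with `a`; then `⁅a, b⁆ ^ k = ⁅a ^ k, b⁆` stays within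
`4/5` of `1` for all `k`, which forces `⁅a, b⁆ = 1` by averaging its powers. Hence the elements
within `1/5` of `1` generate a normal abelian subgroup, and distinct cosets of it are `1/5`-apart
in the unit ball, so its index is bounded by a packing number of the unit ball, which is finite
in finite dimension and independent of `G`.
-/

open scoped commutatorElement

theorem Commute.commutatorElement_pow_left {G : Type*} [Group G] {a b : G}
    (h : Commute a ⁅a, b⁆) (k : ℕ) : ⁅a ^ k, b⁆ = ⁅a, b⁆ ^ k := by
  have hab : a * b * a⁻¹ = ⁅a, b⁆ * b := by rw [commutatorElement_def]; group
  have hconj (k : ℕ) : a ^ k * b * a⁻¹ ^ k = ⁅a, b⁆ ^ k * b := by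
    induction k with
    | zero => simp
    | succ k ih =>
      calc a ^ (k + 1) * b * a⁻¹ ^ (k + 1) = a * (a ^ k * b * a⁻¹ ^ k) * a⁻¹ := by group
        _ = ⁅a, b⁆ ^ k * (a * b * a⁻¹) := by
          rw [ih, ← mul_assoc a, (h.pow_right k).eq]; group
        _ = ⁅a, b⁆ ^ (k + 1) * b := by rw [hab, pow_succ, mul_assoc]
  rw [commutatorElement_def, ← inv_pow, hconj, mul_inv_cancel_right]

theorem Subgroup.closure_normal_of_conj_mem {G : Type*} [Group G] {s : Set G}
    (hs : ∀ g, ∀ x ∈ s, g * x * g⁻¹ ∈ s) : (Subgroup.closure s).Normal := by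
  refine Subgroup.normalizer_eq_top_iff.mp (eq_top_iff.mpr fun g _ =>
    Subgroup.normalizer_le_normalizer_closure s fun x => ⟨hs g x, fun hx => ?_⟩)
  simpa [mul_assoc] using hs g⁻¹ _ hx

theorem IsCompact.packingNumber_ne_top {X : Type*} [PseudoEMetricSpace X] {K : Set X}
    (hK : IsCompact K) {ε : NNReal} (hε : ε ≠ 0) : Metric.packingNumber ε K ≠ ⊤ := by
  obtain ⟨C, -, hC, hcover⟩ :=
    Metric.exists_finite_isCover_of_isCompact (ε := ε / 2) (by simpa using hε) hK
  refine ne_top_of_le_ne_top hC.encard_lt_top.ne ?_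
  calc Metric.packingNumber ε K = Metric.packingNumber (2 * (ε / 2)) K := by
        rw [mul_div_cancel₀ _ two_ne_zero]
    _ ≤ Metric.externalCoveringNumber (ε / 2) K :=
        Metric.packingNumber_two_mul_le_externalCoveringNumber _ _
    _ ≤ C.encard := hcover.externalCoveringNumber_le_encard

section NormedRing

variable {E : Type*} [NormedRing E]

theorem norm_mul_sub_mul_le (a b : E) : ‖a * b - b * a‖ ≤ 2 * ‖a - 1‖ * ‖b - 1‖ := by
  have h : a * b - b * a = (a - 1) * (b - 1) - (b - 1) * (a - 1) := by noncomm_ring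
  calc ‖a * b - b * a‖ ≤ ‖(a - 1) * (b - 1)‖ + ‖(b - 1) * (a - 1)‖ := h ▸ norm_sub_le _ _
    _ ≤ ‖a - 1‖ * ‖b - 1‖ + ‖b - 1‖ * ‖a - 1‖ := by gcongr <;> exact norm_mul_le _ _
    _ = 2 * ‖a - 1‖ * ‖b - 1‖ := by ring

theorem IsOfFinOrder.eq_one_of_forall_norm_pow_sub_one_le [NormedAlgebra ℝ E] {M : E}
    (hM : IsOfFinOrder M) {r : ℝ} (hr : r < 1) (h : ∀ k : ℕ, ‖M ^ k - 1‖ ≤ r) : M = 1 := by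
  set m := orderOf M
  have hm : (0 : ℝ) < m := Nat.cast_pos.mpr hM.orderOf_pos
  -- `P` averages the powers of `M`, so `1 - P` is the average of the `(1 - M ^ j) * (1 - P)`.
  set P : E := (m : ℝ)⁻¹ • ∑ j ∈ Finset.range m, M ^ j with hP
  have hMP : M * P = P := by
    have := mul_geom_sum M m
    rw [pow_orderOf_eq_one, sub_self, sub_mul, one_mul, sub_eq_zero] at this
    rw [hP, mul_smul_comm, this]
  have hpowP (j : ℕ) : M ^ j * P = P := by
    induction j with
    | zero => rw [pow_zero, one_mul]
    | succ j ih => rw [pow_succ, mul_assoc, hMP, ih]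
  have hsum : (m : ℝ) • (1 - P) = ∑ j ∈ Finset.range m, (1 - M ^ j) * (1 - P) := by
    have hterm (j : ℕ) : (1 - M ^ j) * (1 - P) = 1 - M ^ j := by
      rw [sub_mul, one_mul, mul_sub, mul_one, hpowP]; abel
    rw [Finset.sum_congr rfl fun j _ => hterm j, Finset.sum_sub_distrib, smul_sub, hP,
      smul_inv_smul₀ hm.ne', Finset.sum_const, Finset.card_range, Nat.cast_smul_eq_nsmul]
  have hnorm : (m : ℝ) * ‖1 - P‖ ≤ m * r * ‖1 - P‖ :=
    calc (m : ℝ) * ‖1 - P‖ = ‖(m : ℝ) • (1 - P)‖ := by rw [norm_smul, Real.norm_of_nonneg hm.le]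
      _ ≤ ∑ j ∈ Finset.range m, ‖1 - M ^ j‖ * ‖1 - P‖ :=
        hsum ▸ (norm_sum_le _ _).trans (Finset.sum_le_sum fun j _ => norm_mul_le _ _)
      _ ≤ ∑ j ∈ Finset.range m, r * ‖1 - P‖ := by
        gcongr with j; rw [norm_sub_rev]; exact h j
      _ = m * r * ‖1 - P‖ := by rw [Finset.sum_const, Finset.card_range, nsmul_eq_mul, mul_assoc]
  have hP1 : P = 1 := by
    have : ‖1 - P‖ = 0 := by nlinarith [mul_pos hm (sub_pos.2 hr), norm_nonneg (1 - P)]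
    exact (sub_eq_zero.mp (norm_eq_zero.mp this)).symm
  calc M = M * P := by rw [hP1, mul_one]
    _ = 1 := by rw [hMP, hP1]

end NormedRing

namespace Unitary

variable {A : Type*} [NormedRing A] [StarRing A] [CStarRing A]

theorem norm_coe_le_one (u : unitary A) : ‖(u : A)‖ ≤ 1 := by
  rcases subsingleton_or_nontrivial A with hA | hA
  · simp [Subsingleton.elim (u : A) 0]
  · exact (CStarRing.norm_coe_unitary u).le

theorem norm_sub_one_le_two (u : unitary A) : ‖(u : A) - 1‖ ≤ 2 :=
  calc ‖(u : A) - 1‖ ≤ ‖(u : A)‖ + ‖((1 : unitary A) : A)‖ := norm_sub_le _ _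
    _ ≤ 2 := by linarith [norm_coe_le_one u, norm_coe_le_one (1 : unitary A)]

theorem norm_sub_eq_norm_inv_mul_sub_one (u v : unitary A) :
    ‖(u : A) - v‖ = ‖((u⁻¹ * v : unitary A) : A) - 1‖ := by
  rw [← CStarRing.norm_coe_unitary_mul u⁻¹, norm_sub_rev, Submonoid.coe_mul, mul_sub,
    ← Submonoid.coe_mul, inv_mul_cancel, Submonoid.coe_one]

theorem norm_conj_sub_one (u v : unitary A) :
    ‖((u * v * u⁻¹ : unitary A) : A) - 1‖ = ‖(v : A) - 1‖ := by
  have h : ((u * v * u⁻¹ : unitary A) : A) - 1 = u * (((v : A) - 1) * (u⁻¹ : unitary A)) := by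
    rw [sub_mul, mul_sub, one_mul, ← Submonoid.coe_mul, ← Submonoid.coe_mul, ← Submonoid.coe_mul,
      mul_inv_cancel, Submonoid.coe_one, mul_assoc]
  rw [h, CStarRing.norm_coe_unitary_mul, CStarRing.norm_mul_coe_unitary]

theorem norm_commutatorElement_sub_one_le (u v : unitary A) :
    ‖((⁅u, v⁆ : unitary A) : A) - 1‖ ≤ 2 * ‖(u : A) - 1‖ * ‖(v : A) - 1‖ := by
  have h : ((⁅u, v⁆ : unitary A) : A) - 1 =
      ((u : A) * v - v * u) * ((u⁻¹ * v⁻¹ : unitary A) : A) := by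
    simp only [sub_mul, ← Submonoid.coe_mul, commutatorElement_def, mul_assoc,
      mul_inv_cancel_left, mul_inv_cancel, Submonoid.coe_one]
  rw [h, CStarRing.norm_mul_coe_unitary]
  exact norm_mul_sub_mul_le _ _

theorem commutatorElement_eq_one_of_commute [NormedAlgebra ℝ A] {u v : unitary A}
    (hfin : IsOfFinOrder ⁅u, v⁆) (hcomm : Commute u ⁅u, v⁆) (hv : ‖(v : A) - 1‖ ≤ 1 / 5) :
    ⁅u, v⁆ = 1 := by
  refine Subtype.ext ((Submonoid.isOfFinOrder_coe.mpr hfin).eq_one_of_forall_norm_pow_sub_one_le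
    (r := 4 / 5) (by norm_num) fun k => ?_)
  rw [← SubmonoidClass.coe_pow, ← hcomm.commutatorElement_pow_left]
  calc _ ≤ 2 * ‖((u ^ k : unitary A) : A) - 1‖ * ‖(v : A) - 1‖ :=
        norm_commutatorElement_sub_one_le _ _
    _ ≤ 2 * 2 * (1 / 5) := by gcongr; exact norm_sub_one_le_two _
    _ = 4 / 5 := by norm_num

section FaithfulRepresentation

variable {G : Type*} [Group G]

-- Any radius `δ < 1/4` would do: `2 * δ < 1` makes commutators contract, and `2 * 2 * δ < 1`
-- is the bound on the powers of a commutator in `commutatorElement_eq_one_of_commute`.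
def nearOne (ρ : G →* unitary A) : Set G := {g | ‖(ρ g : A) - 1‖ ≤ 1 / 5}

variable {ρ : G →* unitary A}

theorem conj_mem_nearOne (h : G) {g : G} (hg : g ∈ nearOne ρ) : h * g * h⁻¹ ∈ nearOne ρ := by
  simpa only [nearOne, Set.mem_ofPred_eq, map_mul, map_inv, norm_conj_sub_one] using hg

theorem commute_of_mem_nearOne [NormedAlgebra ℝ A] [Finite G] (hρ : Function.Injective ρ)
    {a b : G} (ha : a ∈ nearOne ρ) (hb : b ∈ nearOne ρ) : Commute a b := by
  by_contra hab
  obtain ⟨b, ⟨hb, hab⟩, hmin⟩ := Set.exists_min_image {b | b ∈ nearOne ρ ∧ ¬Commute a b}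
    (fun b => ‖(ρ b : A) - 1‖) (Set.toFinite _) ⟨b, hb, hab⟩
  have hb_pos : 0 < ‖(ρ b : A) - 1‖ := by
    refine norm_pos_iff.mpr (sub_ne_zero.mpr fun h => hab ?_)
    have hρb : ρ b = ρ 1 := by rw [map_one]; exact Subtype.ext h
    rw [hρ hρb]
    exact Commute.one_right a
  have hc_lt : ‖(ρ ⁅a, b⁆ : A) - 1‖ < ‖(ρ b : A) - 1‖ :=
    calc ‖(ρ ⁅a, b⁆ : A) - 1‖ ≤ 2 * ‖(ρ a : A) - 1‖ * ‖(ρ b : A) - 1‖ := by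
          rw [map_commutatorElement]; exact norm_commutatorElement_sub_one_le _ _
      _ ≤ 2 * (1 / 5) * ‖(ρ b : A) - 1‖ := by gcongr; exact ha
      _ < ‖(ρ b : A) - 1‖ := by linarith
  have hc : ⁅a, b⁆ ∈ nearOne ρ := hc_lt.le.trans hb
  have hac : Commute a ⁅a, b⁆ := by
    by_contra h
    exact (hmin _ ⟨hc, h⟩).not_gt hc_lt
  have hρc : ⁅ρ a, ρ b⁆ = 1 := commutatorElement_eq_one_of_commute
    (map_commutatorElement ρ a b ▸ ρ.isOfFinOrder (isOfFinOrder_of_finite _))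
    (map_commutatorElement ρ a b ▸ hac.map ρ) hb
  rw [← map_commutatorElement, ← map_one ρ] at hρc
  exact hab (commutatorElement_eq_one_iff_mul_comm.mp (hρ hρc))

theorem index_closure_nearOne_le [Finite G] :
    ((Subgroup.closure (nearOne ρ)).index : ℕ∞) ≤
      Metric.packingNumber (1 / 5) (Metric.closedBall (0 : A) 1) := by
  set H := Subgroup.closure (nearOne ρ)
  set f : G ⧸ H → A := fun q => ρ q.out
  have hsep {q r : G ⧸ H} (hqr : q ≠ r) : (1 / 5 : ℝ) < dist (f q) (f r) := by
    rw [dist_eq_norm, norm_sub_eq_norm_inv_mul_sub_one, ← map_inv, ← map_mul]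
    refine lt_of_not_ge fun hle => hqr ?_
    rw [← QuotientGroup.out_eq' q, ← QuotientGroup.out_eq' r]
    exact QuotientGroup.eq.mpr (Subgroup.subset_closure hle)
  have hf : Function.Injective f := fun q r hfqr => by
    by_contra hqr
    have := hsep hqr
    rw [hfqr, dist_self] at this
    norm_num at this
  calc (H.index : ℕ∞) = ENat.card (G ⧸ H) := (ENat.card_eq_coe_natCard _).symm
    _ ≤ (Set.range f).encard := hf.encard_range
    _ ≤ Metric.packingNumber (1 / 5) (Metric.closedBall (0 : A) 1) := by
      refine Metric.IsSeparated.encard_le_packingNumber ?_ ?_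
      · rintro _ ⟨q, rfl⟩
        simpa using norm_coe_le_one (ρ q.out)
      · rintro _ ⟨q, rfl⟩ _ ⟨r, rfl⟩ hne
        rw [edist_nndist, ENNReal.coe_lt_coe, ← NNReal.coe_lt_coe, coe_nndist]
        simpa using hsep (ne_of_apply_ne f hne)

end FaithfulRepresentation

end Unitary

theorem Units.conj_mem_unitary_of_star_mul_mul_eq {R : Type*} [Monoid R] [StarMul R] (b g : Rˣ)
    (h : star (g : R) * (star (b : R) * b) * g = star (b : R) * b) :
    ((b * g * b⁻¹ : Rˣ) : R) ∈ unitary R := by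
  rw [(Units.isUnit _).mem_unitary_iff_star_mul_self]
  calc star ((b * g * b⁻¹ : Rˣ) : R) * ((b * g * b⁻¹ : Rˣ) : R)
      = star (↑b⁻¹ : R) * (star (g : R) * (star (b : R) * b) * g) * ↑b⁻¹ := by
        simp only [Units.val_mul, star_mul, mul_assoc]
    _ = star ((b : R) * ↑b⁻¹) * ((b : R) * ↑b⁻¹) := by
        rw [h, star_mul]; simp only [mul_assoc]
    _ = 1 := by rw [Units.mul_inv, star_one, one_mul]

def Subgroup.sumStarMulSelf {R : Type*} [Semiring R] [StarRing R] (G : Subgroup Rˣ)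
    [Fintype G] : R :=
  ∑ g : G, star ((g : Rˣ) : R) * (g : Rˣ)

theorem Subgroup.star_mul_sumStarMulSelf_mul {R : Type*} [Semiring R] [StarRing R]
    (G : Subgroup Rˣ) [Fintype G] (g : G) :
    star ((g : Rˣ) : R) * G.sumStarMulSelf * (g : Rˣ) = G.sumStarMulSelf := by
  rw [sumStarMulSelf, Finset.mul_sum, Finset.sum_mul]
  exact Fintype.sum_equiv (Equiv.mulRight g) _ _ fun h => by
    simp only [Equiv.coe_mulRight, Subgroup.coe_mul, Units.val_mul, star_mul, mul_assoc]

theorem Subgroup.isStrictlyPositive_sumStarMulSelf {A : Type*} [CStarAlgebra A] [PartialOrder A]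
    [StarOrderedRing A] (G : Subgroup Aˣ) [Fintype G] : IsStrictlyPositive G.sumStarMulSelf := by
  classical
  rw [sumStarMulSelf, ← Finset.add_sum_erase _ _ (Finset.mem_univ 1)]
  refine IsStrictlyPositive.add_nonneg ?_ (Finset.sum_nonneg fun g _ => star_mul_self_nonneg _)
  simp

theorem Subgroup.exists_conj_mem_unitary {A : Type*} [CStarAlgebra A] [PartialOrder A]
    [StarOrderedRing A] (G : Subgroup Aˣ) [Finite G] :
    ∃ u : Aˣ, ∀ g ∈ G, ((u * g * u⁻¹ : Aˣ) : A) ∈ unitary A := by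
  have := Fintype.ofFinite G
  obtain ⟨b, hb, hp⟩ :=
    CStarAlgebra.isStrictlyPositive_iff_eq_star_mul_self.mp G.isStrictlyPositive_sumStarMulSelf
  refine ⟨hb.unit, fun g hg => Units.conj_mem_unitary_of_star_mul_mul_eq _ _ ?_⟩
  rw [IsUnit.unit_spec, ← hp]
  exact G.star_mul_sumStarMulSelf_mul ⟨g, hg⟩

def HasAbelianNormalSubgroupOfIndexLE (G : Type*) [Group G] (j : ℕ) : Prop :=
  ∃ A : Subgroup G, A.Normal ∧ (∀ x y : A, x * y = y * x) ∧ A.index ≤ j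

theorem Unitary.exists_hasAbelianNormalSubgroupOfIndexLE_of_injective (A : Type*) [NormedRing A]
    [StarRing A] [CStarRing A] [NormedAlgebra ℝ A] [ProperSpace A] :
    ∃ j : ℕ, ∀ (G : Type*) [Group G] [Finite G] (ρ : G →* unitary A), Function.Injective ρ →
      HasAbelianNormalSubgroupOfIndexLE G j := by
  have hfin := (isCompact_closedBall (0 : A) 1).packingNumber_ne_top (ε := 1 / 5) (by norm_num)
  refine ⟨(Metric.packingNumber (1 / 5) (Metric.closedBall (0 : A) 1)).toNat,
    fun G _ _ ρ hρ => ⟨Subgroup.closure (Unitary.nearOne ρ), ?_, ?_, ?_⟩⟩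
  · exact Subgroup.closure_normal_of_conj_mem fun g x hx => Unitary.conj_mem_nearOne g hx
  · exact isMulCommutative_iff.mp <| Subgroup.isMulCommutative_closure fun a ha b hb =>
      (Unitary.commute_of_mem_nearOne hρ ha hb).eq
  · rw [← ENat.natCast_le_natCast, ENat.natCast_toNat hfin]
    exact Unitary.index_closure_nearOne_le

theorem CStarAlgebra.exists_hasAbelianNormalSubgroupOfIndexLE (A : Type*) [CStarAlgebra A]
    [PartialOrder A] [StarOrderedRing A] [ProperSpace A] :
    ∃ j : ℕ, ∀ G : Subgroup Aˣ, Finite G → HasAbelianNormalSubgroupOfIndexLE G j := by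
  obtain ⟨j, hj⟩ := Unitary.exists_hasAbelianNormalSubgroupOfIndexLE_of_injective A
  refine ⟨j, fun G _ => ?_⟩
  obtain ⟨u, hu⟩ := G.exists_conj_mem_unitary
  let ρ : G →* unitary A := MonoidHom.mk' (fun g => ⟨_, hu g g.2⟩) fun g h =>
    Subtype.ext (by simp [mul_assoc])
  refine hj G ρ fun g h hgh => Subtype.ext ?_
  have hconj : u * g * u⁻¹ = u * h * u⁻¹ := Units.ext (congrArg Subtype.val hgh)
  simpa using hconj

/-- **Jordan's theorem on finite linear groups (1877).**
For every natural number `d` there exists `j : ℕ` such that every finite subgroup `G` of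
`GL_d(ℂ)` contains a normal abelian subgroup `A` of index `[G : A] ≤ j`. -/
theorem jordan_property_of_linear_groups (d : ℕ) :
    ∃ j : ℕ, ∀ G : Subgroup (Matrix.GeneralLinearGroup (Fin d) ℂ), Finite G →
      ∃ A : Subgroup G, A.Normal ∧ (∀ x y : A, x * y = y * x) ∧ A.index ≤ j := by
  open scoped Matrix.Norms.L2Operator MatrixOrder in
  exact CStarAlgebra.exists_hasAbelianNormalSubgroupOfIndexLE (Matrix (Fin d) (Fin d) ℂ)
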